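/- arXiv:2209.08436 — 3 statements merged into one kernel-verified Lean document; each statement's English description precedes it below -/
import Mathlib

section
/- Let f₁ : ℝⁿ → ℝ be λ-strongly convex and differentiable with minimizer z₁*, and let f₂ : ℝⁿ → ℝ satisfy |f₁(z) − f₂(z)| ≤ Δ for all z, with minimizer z₂*. Then ‖z₁* − z₂*‖² ≤ 4Δ/λ. -/
/-!
Since `z₁` minimizes `f₁`, its gradient vanishes there, so strong convexity at `z₁` gives
`λ/2 ‖z₂ - z₁‖² ≤ f₁ z₂ - f₁ z₁`. Moving between `f₁` and `f₂` costs at most `Δ` each way, so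
`f₁ z₂ ≤ f₂ z₂ + Δ ≤ f₂ z₁ + Δ ≤ f₁ z₁ + 2Δ`, and hence `λ/2 ‖z₁ - z₂‖² ≤ 2Δ`.
-/

open RealInnerProductSpace

section

variable {E : Type*} [NormedAddCommGroup E] [InnerProductSpace ℝ E] [CompleteSpace E]

theorem IsLocalMin.gradient_eq_zero {f : E → ℝ} {x : E} (h : IsLocalMin f x) :
    gradient f x = 0 := by
  simp [gradient, h.fderiv_eq_zero]

theorem quadratic_growth_of_strong_convexity_of_forall_le {f : E → ℝ} {lam : ℝ}
    (hsc : ∀ z z' : E, f z' ≥ f z + ⟪gradient f z, z' - z⟫ + lam / 2 * ‖z' - z‖ ^ 2)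
    {x : E} (hx : ∀ z, f x ≤ f z) (y : E) :
    lam / 2 * ‖y - x‖ ^ 2 ≤ f y - f x := by
  have hgrad : gradient f x = 0 := IsLocalMin.gradient_eq_zero (.of_forall hx)
  have := hsc x y
  rw [hgrad, inner_zero_left] at this
  linarith

end

theorem sub_le_two_mul_of_abs_sub_le {α : Type*} {f₁ f₂ : α → ℝ} {Δ : ℝ}
    (hclose : ∀ z, |f₁ z - f₂ z| ≤ Δ) {x₂ : α} (hx₂ : ∀ z, f₂ x₂ ≤ f₂ z) (x₁ : α) :
    f₁ x₂ - f₁ x₁ ≤ 2 * Δ := by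
  have h₁ := abs_le.mp (hclose x₁)
  have h₂ := abs_le.mp (hclose x₂)
  linarith [hx₂ x₁]

theorem stmt_2_general {n : ℕ}
    (f₁ f₂ : EuclideanSpace ℝ (Fin n) → ℝ)
    (lam : ℝ) (hlam : 0 < lam)
    (hsc : ∀ z z' : EuclideanSpace ℝ (Fin n),
      f₁ z' ≥ f₁ z + ⟪gradient f₁ z, z' - z⟫ + lam / 2 * ‖z' - z‖ ^ 2)
    (Δ : ℝ)
    (hclose : ∀ z, |f₁ z - f₂ z| ≤ Δ)
    (z₁ z₂ : EuclideanSpace ℝ (Fin n))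
    (hz₁ : ∀ z, f₁ z₁ ≤ f₁ z) (hz₂ : ∀ z, f₂ z₂ ≤ f₂ z) :
    ‖z₁ - z₂‖ ^ 2 ≤ 4 * Δ / lam := by
  have hgrowth := quadratic_growth_of_strong_convexity_of_forall_le hsc hz₁ z₂
  have hgap := sub_le_two_mul_of_abs_sub_le hclose hz₂ z₁
  rw [norm_sub_rev, le_div_iff₀ hlam]
  linarith

theorem stmt_2 {n : ℕ}
    (f₁ f₂ : EuclideanSpace ℝ (Fin n) → ℝ)
    (lam : ℝ) (hlam : 0 < lam)
    (hdiff : Differentiable ℝ f₁)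
    (hsc : ∀ z z' : EuclideanSpace ℝ (Fin n),
      f₁ z' ≥ f₁ z + ⟪gradient f₁ z, z' - z⟫ + lam / 2 * ‖z' - z‖ ^ 2)
    (Δ : ℝ) (hΔ : 0 ≤ Δ)
    (hclose : ∀ z, |f₁ z - f₂ z| ≤ Δ)
    (z₁ z₂ : EuclideanSpace ℝ (Fin n))
    (hz₁ : ∀ z, f₁ z₁ ≤ f₁ z) (hz₂ : ∀ z, f₂ z₂ ≤ f₂ z) :
    ‖z₁ - z₂‖ ^ 2 ≤ 4 * Δ / lam :=
  stmt_2_general f₁ f₂ lam hlam hsc Δ hclose z₁ z₂ hz₁ hz₂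
end

section
/- There exist distributions p, q on {0,1}² × {0,1} that are under 1-sparse joint shift but satisfy neither label shift nor covariate shift. Concretely: under p, Y ~ Bern(0.5), and given Y=0, (X₁,X₂) ~ Bern(0.7) ⊗ Bern(0.6), given Y=1, (X₁,X₂) ~ Bern(0.1) ⊗ Bern(0.2); under q, Y ~ Bern(0.6), and given Y=0, (X₁,X₂) ~ Bern(0.5) ⊗ Bern(0.6), given Y=1, (X₁,X₂) ~ Bern(0.5) ⊗ Bern(0.2). Then (p,q) is under 1-SJS with I = {1}, but q(x₁=1|y=1) ≠ p(x₁=1|y=1) (so not label shift) and q(y=1|x₁=1,x₂=1) ≠ p(y=1|x₁=1,x₂=1) (so not covariate shift). -/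
/-- `bern a b` is the probability that a Bernoulli(a) variable takes value `b`. -/
noncomputable def bern (a : ℝ) (b : Bool) : ℝ := if b then a else 1 - a

/-- Source distribution `p` on (x₁, x₂, y). -/
noncomputable def pdist (x₁ x₂ y : Bool) : ℝ :=
  bern 0.5 y * (if y then bern 0.1 x₁ * bern 0.2 x₂ else bern 0.7 x₁ * bern 0.6 x₂)

/-- Target distribution `q` on (x₁, x₂, y). -/
noncomputable def qdist (x₁ x₂ y : Bool) : ℝ :=
  bern 0.6 y * (if y then bern 0.5 x₁ * bern 0.2 x₂ else bern 0.5 x₁ * bern 0.6 x₂)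

/-!
Both `p` and `q` make `X₁` and `X₂` conditionally independent given `Y`, and they give `X₂ | Y`
the same law, so `q(x₂ | x₁, y) = p(x₂ | x₁, y)` is the law of `X₂ | Y = y` under both. The laws of
`X₁ | Y` and the priors on `Y` differ, and the remaining two claims are direct computations.
-/

theorem sum_bern (a : ℝ) : ∑ b, bern a b = 1 := by
  simp [bern]

theorem bern_ne_zero {a : ℝ} (ha : a ∈ Set.Ioo 0 1) (b : Bool) : bern a b ≠ 0 := by
  cases b <;> simp only [bern] <;> grind

noncomputable def condIndepDist (ρ : ℝ) (α β : Bool → ℝ) (x₁ x₂ y : Bool) : ℝ :=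
  bern ρ y * (bern (α y) x₁ * bern (β y) x₂)

namespace condIndepDist

variable {ρ : ℝ} {α : Bool → ℝ} (β : Bool → ℝ)

theorem div_sum_snd (hρ : ρ ∈ Set.Ioo 0 1) (hα : ∀ y, α y ∈ Set.Ioo 0 1) (x₁ x₂ y : Bool) :
    condIndepDist ρ α β x₁ x₂ y / ∑ x₂', condIndepDist ρ α β x₁ x₂' y = bern (β y) x₂ := by
  have hc : bern ρ y * bern (α y) x₁ ≠ 0 := mul_ne_zero (bern_ne_zero hρ y) (bern_ne_zero (hα y) x₁)
  simp only [condIndepDist, ← mul_assoc, ← Finset.mul_sum, sum_bern, mul_one]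
  exact mul_div_cancel_left₀ _ hc

theorem sum_snd_div_sum (hρ : ρ ∈ Set.Ioo 0 1) (x₁ y : Bool) :
    (∑ x₂, condIndepDist ρ α β x₁ x₂ y) / ∑ x₁', ∑ x₂, condIndepDist ρ α β x₁' x₂ y
      = bern (α y) x₁ := by
  simp only [condIndepDist, ← Finset.mul_sum, sum_bern, mul_one]
  exact mul_div_cancel_left₀ _ (bern_ne_zero hρ y)

end condIndepDist

theorem pdist_eq :
    pdist = condIndepDist 0.5 (fun y => if y then 0.1 else 0.7) (fun y => if y then 0.2 else 0.6) := by
  ext x₁ x₂ y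
  cases y <;> rfl

theorem qdist_eq :
    qdist = condIndepDist 0.6 (fun _ => 0.5) (fun y => if y then 0.2 else 0.6) := by
  ext x₁ x₂ y
  cases y <;> rfl

theorem stmt_7 :
    -- (p, q) is under 1-SJS with I = {1}: q(x₂ | x₁, y) = p(x₂ | x₁, y)
    (∀ x₁ x₂ y : Bool,
      qdist x₁ x₂ y / (∑ x₂' : Bool, qdist x₁ x₂' y)
        = pdist x₁ x₂ y / (∑ x₂' : Bool, pdist x₁ x₂' y)) ∧
    -- not label shift: q(x₁ = 1 | y = 1) ≠ p(x₁ = 1 | y = 1)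
    ((∑ x₂ : Bool, qdist true x₂ true) / (∑ x₁ : Bool, ∑ x₂ : Bool, qdist x₁ x₂ true)
      ≠ (∑ x₂ : Bool, pdist true x₂ true) / (∑ x₁ : Bool, ∑ x₂ : Bool, pdist x₁ x₂ true)) ∧
    -- not covariate shift: q(y = 1 | x₁ = 1, x₂ = 1) ≠ p(y = 1 | x₁ = 1, x₂ = 1)
    (qdist true true true / (∑ y : Bool, qdist true true y)
      ≠ pdist true true true / (∑ y : Bool, pdist true true y)) := by
  have hp : (0.5 : ℝ) ∈ Set.Ioo 0 1 := by norm_num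
  have hq : (0.6 : ℝ) ∈ Set.Ioo 0 1 := by norm_num
  rw [pdist_eq, qdist_eq]
  refine ⟨fun x₁ x₂ y => ?_, ?_, ?_⟩
  · rw [condIndepDist.div_sum_snd _ hq (fun _ => by norm_num),
      condIndepDist.div_sum_snd _ hp (fun y => by cases y <;> norm_num)]
  · rw [condIndepDist.sum_snd_div_sum _ hq, condIndepDist.sum_snd_div_sum _ hp]
    norm_num [bern]
  · -- the posteriors are `1/3` under `q` and `1/22` under `p`
    norm_num [condIndepDist, bern, Fintype.sum_bool]
end

section
/- Let p, q be probability mass functions on a finite product space X × Y where X = ∏ᵢ Xᵢ, p strictly positive, and suppose q is under s-SJS with index set I: q(x_{I^c} | x_I, y) = p(x_{I^c} | x_I, y). Let κ ⊇ I be a set of coordinates and let f : X → {1,…,L} be any function. Then for any value x_κ and any label value f̄, q(X_κ = x_κ, f(X) = f̄) = Σ_y w*(x_I, y) · p(X_κ = x_κ, f(X) = f̄, Y = y), where w*(x_I, y) = q(X_I = x_I, Y = y) / p(X_I = x_I, Y = y). -/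
open scoped Classical

/-- Marginal pmf of `(X_I, Y)`: sum of `p (x', y)` over `x'` agreeing with `x` on `I`. -/
noncomputable def margI {d : ℕ} {Xi : Fin d → Type*} [∀ i, Fintype (Xi i)] {Y : Type*}
    (p : (∀ i, Xi i) → Y → ℝ) (I : Finset (Fin d)) (x : ∀ i, Xi i) (y : Y) : ℝ :=
  ∑ x' : ∀ i, Xi i, if ∀ i ∈ I, x' i = x i then p x' y else 0

/-- Marginal pmf of the event `{X_κ = x_κ, f(X) = f̄, Y = y}`. -/
noncomputable def margEventY {d : ℕ} {Xi : Fin d → Type*} [∀ i, Fintype (Xi i)] {Y : Type*}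
    (p : (∀ i, Xi i) → Y → ℝ) (κ : Finset (Fin d)) (f : (∀ i, Xi i) → Y)
    (x : ∀ i, Xi i) (fbar : Y) (y : Y) : ℝ :=
  ∑ x' : ∀ i, Xi i, if (∀ i ∈ κ, x' i = x i) ∧ f x' = fbar then p x' y else 0

/-!
Under SJS, `q (x', y) = w*(x'_I, y) · p (x', y)` pointwise; the weight is never a junk quotient
because `p > 0` forces `margI q I x' y ≠ 0` through the SJS identity. On the event
`{X_κ = x_κ}` with `I ⊆ κ` the weight only depends on `x_I`, so it factors out of the marginal sum.
-/

section Marginals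

variable {d : ℕ} {Xi : Fin d → Type*} [∀ i, Fintype (Xi i)] {Y : Type*}

theorem margI_congr (r : (∀ i, Xi i) → Y → ℝ) (I : Finset (Fin d)) {x x' : ∀ i, Xi i}
    (y : Y) (hxx' : ∀ i ∈ I, x' i = x i) : margI r I x' y = margI r I x y := by
  unfold margI
  refine Finset.sum_congr rfl fun z _ => if_congr ?_ rfl rfl
  exact forall₂_congr fun i hi => by rw [hxx' i hi]

theorem margI_pos {p : (∀ i, Xi i) → Y → ℝ} {y : Y} (hp : ∀ x, 0 < p x y)
    (I : Finset (Fin d)) (x : ∀ i, Xi i) : 0 < margI p I x y := by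
  unfold margI
  refine Finset.sum_pos' (fun z _ => ?_) ⟨x, Finset.mem_univ x, by simp [hp x]⟩
  split_ifs
  exacts [(hp z).le, le_rfl]

theorem eq_margI_div_mul_of_div_margI_eq {p q : (∀ i, Xi i) → Y → ℝ} {I : Finset (Fin d)}
    {x : ∀ i, Xi i} {y : Y} (hp : ∀ x, 0 < p x y)
    (hsjs : q x y / margI q I x y = p x y / margI p I x y) :
    q x y = margI q I x y / margI p I x y * p x y := by
  have hmp := margI_pos hp I x
  have hmq : margI q I x y ≠ 0 := by
    intro h
    rw [h, div_zero] at hsjs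
    exact (div_pos (hp x) hmp).ne' hsjs.symm
  rw [div_eq_div_iff hmq hmp.ne'] at hsjs
  field_simp
  linarith

theorem margEventY_eq_mul {p q : (∀ i, Xi i) → Y → ℝ} {κ : Finset (Fin d)}
    {f : (∀ i, Xi i) → Y} {x : ∀ i, Xi i} {fbar y : Y} (c : ℝ)
    (hqp : ∀ x', (∀ i ∈ κ, x' i = x i) → q x' y = c * p x' y) :
    margEventY q κ f x fbar y = c * margEventY p κ f x fbar y := by
  unfold margEventY
  rw [Finset.mul_sum]
  refine Finset.sum_congr rfl fun x' _ => ?_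
  split_ifs with h
  exacts [hqp x' h.1, (mul_zero c).symm]

end Marginals

theorem stmt_9_general {d : ℕ} {Xi : Fin d → Type*} [∀ i, Fintype (Xi i)]
    {Y : Type*} [Fintype Y]
    (p q : (∀ i, Xi i) → Y → ℝ)
    (hp : ∀ x y, 0 < p x y)
    (I : Finset (Fin d))
    -- s-SJS with index set I: q(x_{I^c} | x_I, y) = p(x_{I^c} | x_I, y)
    (hsjs : ∀ x y, q x y / margI q I x y = p x y / margI p I x y)
    (κ : Finset (Fin d)) (hκ : I ⊆ κ)
    (f : (∀ i, Xi i) → Y) :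
    ∀ (x : ∀ i, Xi i) (fbar : Y),
      (∑ y, margEventY q κ f x fbar y)
        = ∑ y, (margI q I x y / margI p I x y) * margEventY p κ f x fbar y := by
  intro x fbar
  refine Finset.sum_congr rfl fun y _ => margEventY_eq_mul _ fun x' hx' => ?_
  have hxI : ∀ i ∈ I, x' i = x i := fun i hi => hx' i (hκ hi)
  rw [eq_margI_div_mul_of_div_margI_eq (hp · y) (hsjs x' y), margI_congr q I y hxI,
    margI_congr p I y hxI]

theorem stmt_9 {d : ℕ} {Xi : Fin d → Type*} [∀ i, Fintype (Xi i)]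
    {Y : Type*} [Fintype Y]
    (p q : (∀ i, Xi i) → Y → ℝ)
    (hp : ∀ x y, 0 < p x y) (hq : ∀ x y, 0 ≤ q x y)
    (hpsum : ∑ x, ∑ y, p x y = 1) (hqsum : ∑ x, ∑ y, q x y = 1)
    (s : ℕ) (I : Finset (Fin d)) (hIcard : I.card ≤ s)
    -- s-SJS with index set I: q(x_{I^c} | x_I, y) = p(x_{I^c} | x_I, y)
    (hsjs : ∀ x y, q x y / margI q I x y = p x y / margI p I x y)
    (κ : Finset (Fin d)) (hκ : I ⊆ κ)
    (f : (∀ i, Xi i) → Y) :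
    ∀ (x : ∀ i, Xi i) (fbar : Y),
      (∑ y, margEventY q κ f x fbar y)
        = ∑ y, (margI q I x y / margI p I x y) * margEventY p κ f x fbar y :=
  stmt_9_general p q hp I hsjs κ hκ f
end
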